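/- Let x ∈ ℝ^n satisfy ⊞_{i∈[n]} x_i = 0. Then for every natural number p, Σ_{i∈[n]} x_i^{2p+1} = 0. -/

import Mathlib

open scoped Classical

/-- ξ_I[x](α): signed count of occurrences of α among the x i, i ∈ I. -/
noncomputable def xiF {ι : Type*} (I : Finset ι) (x : ι → ℝ) (α : ℝ) : ℤ :=
  ((I.filter fun i => x i = α).card : ℤ) - ((I.filter fun i => x i = -α).card : ℤ)

/-- the n-ary limit operation F_I, i.e. ⊞_{i∈I} x_i. -/
noncomputable def FF {ι : Type*} (I : Finset ι) (x : ι → ℝ) : ℝ :=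
  if h : (I.filter fun j => xiF I x (x j) ≠ 0).Nonempty then
    if 0 < xiF I x ((I.filter fun j => xiF I x (x j) ≠ 0).sup' h fun i => |x i|) then
      (I.filter fun j => xiF I x (x j) ≠ 0).sup' h x
    else if xiF I x ((I.filter fun j => xiF I x (x j) ≠ 0).sup' h fun i => |x i|) < 0 then
      (I.filter fun j => xiF I x (x j) ≠ 0).inf' h x
    else 0
  else 0

/-!
If some value had nonzero signed count `ξ`, the set `J` would be nonempty; at the value `M` of
largest modulus in `J`, the sign of `ξ M` forces `⊞ xᵢ ≥ M > 0` or `⊞ xᵢ ≤ -M < 0`. Hence `ξ ≡ 0`,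
i.e. the multiset of the `xᵢ` is invariant under negation, and any odd function sums to zero on it.
-/

section

variable {ι : Type*} {I : Finset ι} {x : ι → ℝ}

lemma xiF_neg (α : ℝ) : xiF I x (-α) = -xiF I x α := by
  simp only [xiF, neg_neg, neg_sub]

lemma xiF_zero : xiF I x 0 = 0 := by
  simp [xiF]

lemma exists_eq_of_xiF_pos {α : ℝ} (h : 0 < xiF I x α) : ∃ i ∈ I, x i = α := by
  obtain ⟨i, hi⟩ : (I.filter fun i => x i = α).Nonempty := by
    rw [← Finset.card_pos]; unfold xiF at h; omega
  exact ⟨i, Finset.mem_filter.mp hi⟩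

lemma exists_eq_neg_of_xiF_neg {α : ℝ} (h : xiF I x α < 0) : ∃ i ∈ I, x i = -α :=
  exists_eq_of_xiF_pos (by rw [xiF_neg]; omega)

lemma FF_ne_zero_of_nonempty (hJ : (I.filter fun j => xiF I x (x j) ≠ 0).Nonempty) :
    FF I x ≠ 0 := by
  set J := I.filter fun j => xiF I x (x j) ≠ 0
  have mem_J {i} (hi : i ∈ I) (hξ : xiF I x (x i) ≠ 0) : i ∈ J := Finset.mem_filter.mpr ⟨hi, hξ⟩
  obtain ⟨j, hjJ, hjM⟩ := J.exists_mem_eq_sup' hJ fun i => |x i|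
  set M := J.sup' hJ fun i => |x i|
  have hξj : xiF I x (x j) ≠ 0 := (Finset.mem_filter.mp hjJ).2
  have hM : 0 < M := hjM ▸ abs_pos.mpr fun h0 => hξj (by rw [h0, xiF_zero])
  have hξM : xiF I x M ≠ 0 := by
    rcases abs_choice (x j) with hx | hx <;> rw [hjM, hx]
    · exact hξj
    · rwa [xiF_neg, neg_ne_zero]
  unfold FF
  rw [dif_pos hJ]
  rcases hξM.lt_or_gt with hneg | hpos
  · rw [if_neg hneg.not_gt, if_pos hneg]
    obtain ⟨i, hi, hxi⟩ := exists_eq_neg_of_xiF_neg hneg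
    have hiJ : i ∈ J := mem_J hi (by rwa [hxi, xiF_neg, neg_ne_zero])
    exact ((J.inf'_le x hiJ).trans_lt (by rw [hxi]; linarith)).ne
  · rw [if_pos hpos]
    obtain ⟨i, hi, hxi⟩ := exists_eq_of_xiF_pos hpos
    have hiJ : i ∈ J := mem_J hi (by rwa [hxi])
    exact ((by rw [hxi]; exact hM : 0 < x i).trans_le (J.le_sup' x hiJ)).ne'

lemma xiF_eq_zero_of_FF_eq_zero (h : FF I x = 0) (α : ℝ) : xiF I x α = 0 := by
  by_contra hα
  obtain ⟨i, hi, hxi⟩ : ∃ i ∈ I, x i = α ∨ x i = -α := by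
    rcases Ne.lt_or_gt hα with hneg | hpos
    · obtain ⟨i, hi, hxi⟩ := exists_eq_neg_of_xiF_neg hneg
      exact ⟨i, hi, .inr hxi⟩
    · obtain ⟨i, hi, hxi⟩ := exists_eq_of_xiF_pos hpos
      exact ⟨i, hi, .inl hxi⟩
  refine FF_ne_zero_of_nonempty ⟨i, Finset.mem_filter.mpr ⟨hi, ?_⟩⟩ h
  rcases hxi with hxi | hxi <;> rw [hxi]
  · exact hα
  · rwa [xiF_neg, neg_ne_zero]

lemma map_neg_eq_map_of_xiF_eq_zero (h : ∀ α, xiF I x α = 0) :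
    I.val.map (fun i => -x i) = I.val.map x := by
  ext α
  have hα := h (-α)
  simp only [xiF, neg_neg, sub_eq_zero, Nat.cast_inj] at hα
  simp only [Multiset.count_map, eq_comm (a := α), neg_eq_iff_eq_neg]
  exact hα

lemma sum_odd_eq_zero_of_xiF_eq_zero {β : Type*} [AddCommGroup β] [IsAddTorsionFree β]
    {f : ℝ → β} (hf : f.Odd) (h : ∀ α, xiF I x α = 0) : ∑ i ∈ I, f (x i) = 0 := by
  rw [← neg_eq_self]
  calc -∑ i ∈ I, f (x i) = ∑ i ∈ I, f (-x i) := by simp only [hf.eq, Finset.sum_neg_distrib]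
    _ = ((I.val.map fun i => -x i).map f).sum := by rw [Multiset.map_map]; rfl
    _ = ∑ i ∈ I, f (x i) := by rw [map_neg_eq_map_of_xiF_eq_zero h, Multiset.map_map]; rfl

end

theorem stmt_12 {n : ℕ} (x : Fin n → ℝ) (h : FF Finset.univ x = 0) (p : ℕ) :
    ∑ i, (x i) ^ (2 * p + 1) = 0 :=
  sum_odd_eq_zero_of_xiF_eq_zero (f := fun t : ℝ => t ^ (2 * p + 1))
    (fun t => Odd.neg_pow ⟨p, rfl⟩ t) (xiF_eq_zero_of_FF_eq_zero h)
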